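/- arXiv:2208.03059 — 5 statements merged into one kernel-verified Lean document; each statement's English description precedes it below -/
import Mathlib

section
/- For vectors a, b in ℝ³ with a ≠ 0 and a, b not collinear, the integral ∫₀¹ dt / ‖b - t·a‖³ equals (1/(‖a‖²‖b‖² - (a•b)²)) · ( (a•b)/‖b‖ - (a•(b-a))/‖b-a‖ ), assuming also b - a ≠ 0. -/
theorem segment_integral (a b : EuclideanSpace ℝ (Fin 3))
    (ha : a ≠ 0) (hab : LinearIndependent ℝ ![a, b]) (hba : b - a ≠ 0) :
    ∫ t in (0:ℝ)..1, 1 / ‖b - t • a‖ ^ 3 =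
      (1 / (‖a‖ ^ 2 * ‖b‖ ^ 2 - (inner ℝ a b : ℝ) ^ 2)) *
        ((inner ℝ a b : ℝ) / ‖b‖ - (inner ℝ a (b - a) : ℝ) / ‖b - a‖) := by
  have hq0 : ∀ t : ℝ, ‖b - t • a‖ ^ 2
      = ‖a‖ ^ 2 * t ^ 2 - 2 * (inner ℝ a b : ℝ) * t + ‖b‖ ^ 2 := by
    intro t
    rw [← real_inner_self_eq_norm_sq]
    simp only [inner_sub_sub_self, real_inner_smul_left, real_inner_smul_right,
      real_inner_self_eq_norm_sq, real_inner_comm b a, norm_smul, Real.norm_eq_abs,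
      mul_pow, sq_abs]
    ring
  set A : ℝ := ‖a‖ ^ 2 with hA
  set B : ℝ := (inner ℝ a b : ℝ) with hB
  set C : ℝ := ‖b‖ ^ 2 with hC
  have hne : ∀ t : ℝ, b - t • a ≠ 0 := by
    intro t h
    have hb : b = t • a := by rwa [sub_eq_zero] at h
    exact ((LinearIndependent.pair_iff' ha).mp hab t) hb.symm
  have hq : ∀ t : ℝ, ‖b - t • a‖ ^ 2 = A * t ^ 2 - 2 * B * t + C := hq0
  have hqpos : ∀ t : ℝ, 0 < A * t ^ 2 - 2 * B * t + C := by
    intro t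
    rw [← hq]
    exact pow_pos (norm_pos_iff.mpr (hne t)) 2
  have hApos : (0:ℝ) < A := pow_pos (norm_pos_iff.mpr ha) 2
  have hD : 0 < A * C - B ^ 2 := by
    have h := mul_pos hApos (hqpos (B / A))
    have heq : A * (A * (B/A) ^ 2 - 2 * B * (B/A) + C) = A * C - B ^ 2 := by
      field_simp
      ring
    linarith [heq ▸ h]
  have hD' : A * C - B ^ 2 ≠ 0 := ne_of_gt hD
  set q : ℝ → ℝ := fun t => A * t ^ 2 - 2 * B * t + C with hqdef
  have hnorm : ∀ t : ℝ, ‖b - t • a‖ = Real.sqrt (q t) := by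
    intro t
    rw [show q t = A * t ^ 2 - 2 * B * t + C from rfl, ← hq t,
      Real.sqrt_sq (norm_nonneg _)]
  set F : ℝ → ℝ := fun t => (A * t - B) / ((A * C - B ^ 2) * Real.sqrt (q t)) with hF
  have hderiv : ∀ t : ℝ, HasDerivAt F (1 / ‖b - t • a‖ ^ 3) t := by
    intro t
    have hqt : 0 < q t := hqpos t
    have hsq : Real.sqrt (q t) ^ 2 = q t := Real.sq_sqrt hqt.le
    have hsqpos : 0 < Real.sqrt (q t) := Real.sqrt_pos.mpr hqt
    have hsqne : Real.sqrt (q t) ≠ 0 := hsqpos.ne'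
    have hq' : HasDerivAt q (2 * A * t - 2 * B) t := by
      have h : HasDerivAt (fun x : ℝ => A * x ^ 2 - 2 * B * x + C)
          (A * (2 * t) - 2 * B) t := by
        simpa using (((hasDerivAt_id t).pow 2).const_mul A).sub
          ((hasDerivAt_id t).const_mul (2*B)) |>.add_const C
      convert h using 1
      ring
    have hs : HasDerivAt (fun t => Real.sqrt (q t))
        ((A * t - B) / Real.sqrt (q t)) t := by
      have h := (Real.hasDerivAt_sqrt hqt.ne').comp t hq'
      refine h.congr_deriv ?_
      field_simp
    have hnum : HasDerivAt (fun t => A * t - B) A t := by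
      simpa using ((hasDerivAt_id t).const_mul A).sub_const B
    have hden : HasDerivAt (fun t => (A * C - B ^ 2) * Real.sqrt (q t))
        ((A * C - B ^ 2) * ((A * t - B) / Real.sqrt (q t))) t := hs.const_mul _
    have hden0 : (A * C - B ^ 2) * Real.sqrt (q t) ≠ 0 := by positivity
    have hdiv := hnum.div hden hden0
    refine hdiv.congr_deriv ?_
    rw [hnorm t]
    set s := Real.sqrt (q t) with hs'
    set D := A * C - B ^ 2 with hDdef
    have hsq2 : s ^ 2 = A * t ^ 2 - 2 * B * t + C := hsq
    field_simp
    linear_combination A * hsq2 - hDdef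
  have hcont : Continuous fun t : ℝ => 1 / ‖b - t • a‖ ^ 3 := by
    apply Continuous.div continuous_const
    · exact (Continuous.norm (continuous_const.sub (continuous_id.smul continuous_const))).pow 3
    · intro t
      exact ne_of_gt (pow_pos (norm_pos_iff.mpr (hne t)) 3)
  rw [intervalIntegral.integral_eq_sub_of_hasDerivAt
    (fun t _ => hderiv t) (hcont.intervalIntegrable 0 1)]
  have h1 : Real.sqrt (q 1) = ‖b - a‖ := by rw [← hnorm 1, one_smul]
  have h0 : Real.sqrt (q 0) = ‖b‖ := by rw [← hnorm 0, zero_smul, sub_zero]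
  have hab' : (inner ℝ a (b - a) : ℝ) = B - A := by
    rw [inner_sub_right, hB, hA, real_inner_self_eq_norm_sq]
  rw [hF]
  simp only [h1, h0, hab', mul_one, mul_zero, zero_sub]
  have hbnorm : ‖b‖ ≠ 0 := by simpa using hne 0
  have hbanorm : ‖b - a‖ ≠ 0 := norm_ne_zero_iff.mpr hba
  field_simp
  ring
end

section
/- Let a, b ∈ ℝ³ be nonzero and not collinear, and set c = b - a (assumed nonzero and not collinear with a). Then (a × b) · ∫₀¹ dt/‖b - t·a‖³ · (1/‖a‖) equals ( (â•b̂)(â × b̂) / (‖a‖‖b‖(1 - (â•b̂)²)) ) - ( (â•ĉ)(â × ĉ) / (‖a‖‖c‖(1 - (â•ĉ)²)) ), where x̂ = x/‖x‖. -/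
noncomputable def cross3 (a b : EuclideanSpace ℝ (Fin 3)) : EuclideanSpace ℝ (Fin 3) :=
  WithLp.toLp 2 ![a 1 * b 2 - a 2 * b 1, a 2 * b 0 - a 0 * b 2, a 0 * b 1 - a 1 * b 0]

lemma cross3_smul_smul (r s : ℝ) (a b : EuclideanSpace ℝ (Fin 3)) :
    cross3 (r • a) (s • b) = (r * s) • cross3 a b := by
  ext i
  fin_cases i <;> simp [cross3, PiLp.smul_apply, smul_eq_mul] <;> ring

lemma cross3_sub_self (a b : EuclideanSpace ℝ (Fin 3)) :
    cross3 a (b - a) = cross3 a b := by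
  ext i
  fin_cases i <;> simp [cross3, PiLp.sub_apply] <;> ring

lemma scalar_id (A B C d : ℝ) (hA : 0 < A) (hB : 0 < B) (hC : 0 < C)
    (hK : 0 < A^2*B^2 - d^2) (hC2 : C^2 = B^2 - 2*d + A^2) :
    ((A^2 - d)/((A^2*B^2 - d^2)*C) - (-d)/((A^2*B^2 - d^2)*B)) * (1/A) =
      (A⁻¹*(B⁻¹*d)) / (A*B*(1 - (A⁻¹*(B⁻¹*d))^2)) * (A⁻¹*B⁻¹)
      - (A⁻¹*(C⁻¹*(d - A^2))) / (A*C*(1 - (A⁻¹*(C⁻¹*(d - A^2)))^2)) * (A⁻¹*C⁻¹) := by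
  have h1d : 1 - (A⁻¹*(B⁻¹*d))^2 = (A^2*B^2 - d^2) / (A^2*B^2) := by
    field_simp
  have h2d : 1 - (A⁻¹*(C⁻¹*(d - A^2)))^2 = (A^2*B^2 - d^2) / (A^2*C^2) := by
    field_simp; linear_combination A^2 * hC2
  rw [h1d, h2d]
  have hKne : A^2*B^2 - d^2 ≠ 0 := hK.ne'
  field_simp
  ring_nf

theorem segment_field_symmetric_form (a b : EuclideanSpace ℝ (Fin 3))
    (ha : a ≠ 0) (hb : b ≠ 0) (hab : LinearIndependent ℝ ![a, b])
    (hc : b - a ≠ 0) (hac : LinearIndependent ℝ ![a, b - a]) :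
    ((∫ t in (0:ℝ)..1, 1 / ‖b - t • a‖ ^ 3) * (1 / ‖a‖)) • cross3 a b =
      (((inner ℝ (‖a‖⁻¹ • a) (‖b‖⁻¹ • b) : ℝ) /
          (‖a‖ * ‖b‖ * (1 - (inner ℝ (‖a‖⁻¹ • a) (‖b‖⁻¹ • b) : ℝ) ^ 2))) •
            cross3 (‖a‖⁻¹ • a) (‖b‖⁻¹ • b)) -
      (((inner ℝ (‖a‖⁻¹ • a) (‖b - a‖⁻¹ • (b - a)) : ℝ) /
          (‖a‖ * ‖b - a‖ * (1 - (inner ℝ (‖a‖⁻¹ • a) (‖b - a‖⁻¹ • (b - a)) : ℝ) ^ 2))) •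
            cross3 (‖a‖⁻¹ • a) (‖b - a‖⁻¹ • (b - a))) := by
  have hA : (0:ℝ) < ‖a‖ := norm_pos_iff.mpr ha
  have hB : (0:ℝ) < ‖b‖ := norm_pos_iff.mpr hb
  have hC : (0:ℝ) < ‖b - a‖ := norm_pos_iff.mpr hc
  set A := ‖a‖ with hAdef
  set B := ‖b‖ with hBdef
  set C := ‖b - a‖ with hCdef
  set d : ℝ := inner ℝ a b with hddef
  have hne : ∀ t : ℝ, b - t • a ≠ 0 := by
    intro t h
    rw [sub_eq_zero] at h
    rw [LinearIndependent.pair_iff] at hab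
    have := (hab t (-1) (by rw [← h]; module)).2
    norm_num at this
  set Q : ℝ → ℝ := fun t => A^2 * t^2 - 2*d*t + B^2 with hQdef
  have hQeq : ∀ t : ℝ, ‖b - t • a‖^2 = Q t := by
    intro t
    rw [hQdef]
    have : ‖b - t • a‖^2 = B^2 - 2 * inner ℝ b (t • a) + ‖t • a‖^2 :=
      norm_sub_sq_real b (t • a)
    rw [this, real_inner_smul_right, real_inner_comm, norm_smul]
    simp only [Real.norm_eq_abs, mul_pow, sq_abs, ← hddef, ← hAdef]
    ring
  have hQpos : ∀ t : ℝ, 0 < Q t := by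
    intro t
    rw [← hQeq]
    exact pow_pos (norm_pos_iff.mpr (hne t)) 2
  set K : ℝ := A^2*B^2 - d^2 with hKdef
  have hK : 0 < K := by
    have h1 := hQpos (d / A^2)
    have h2 : Q (d / A^2) = K / A^2 := by
      rw [hQdef, hKdef]; field_simp; ring
    rw [h2] at h1
    have := mul_pos h1 (pow_pos hA 2)
    rwa [div_mul_cancel₀ _ (by positivity)] at this
  have hnorm : ∀ t : ℝ, ‖b - t • a‖ = Real.sqrt (Q t) := by
    intro t
    rw [← hQeq t, Real.sqrt_sq (norm_nonneg _)]
  set F : ℝ → ℝ := fun t => (A^2 * t - d) / (K * Real.sqrt (Q t)) with hFdef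
  have hderiv : ∀ t : ℝ, HasDerivAt F (1 / ‖b - t • a‖^3) t := by
    intro t
    set s : ℝ := Real.sqrt (Q t) with hsdef
    have hs0 : 0 < s := Real.sqrt_pos.mpr (hQpos t)
    have hs2 : s^2 = Q t := Real.sq_sqrt (hQpos t).le
    have hQ' : HasDerivAt Q (2*A^2*t - 2*d) t := by
      have h1 := ((hasDerivAt_pow 2 t).const_mul (A^2)).sub
        ((hasDerivAt_id t).const_mul (2*d))
      have h2 := h1.add_const (B^2)
      convert h2 using 1
      · rfl
      · rfl
      all_goals (simp [hQdef] <;> ring)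
    have hsq : HasDerivAt (fun t => Real.sqrt (Q t)) ((2*A^2*t - 2*d) / (2*s)) t :=
      hQ'.sqrt (hQpos t).ne'
    have hnum : HasDerivAt (fun x : ℝ => A^2 * x - d) (A^2) t := by
      have := ((hasDerivAt_id t).const_mul (A^2)).sub_const d
      simpa using this
    have hden : HasDerivAt (fun t => K * Real.sqrt (Q t)) (K * ((2*A^2*t - 2*d) / (2*s))) t :=
      hsq.const_mul K
    have hdne : K * Real.sqrt (Q t) ≠ 0 := by
      rw [← hsdef]; positivity
    have hF := hnum.div hden hdne
    rw [hnorm t, ← hsdef]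
    convert hF using 1
    · rfl
    · rfl
    · rfl
    rw [← hsdef]
    have hkey : A^2 * s^2 - (A^2*t - d)^2 = K := by
      rw [hs2, hQdef, hKdef]; ring
    have h : A^2*(K*s) - (A^2*t-d)*(K*((2*A^2*t-2*d)/(2*s))) = K^2/s := by
      rw [eq_div_iff hs0.ne']
      field_simp
      linear_combination 2 * K * s * hkey + (A^2 - 2*A^2*s*K) * hs2
    rw [h]
    field_simp
  have hcont : Continuous fun t : ℝ => 1/‖b - t • a‖^3 := by
    apply Continuous.div continuous_const
    · exact ((continuous_const.sub (continuous_id.smul continuous_const)).norm.pow 3)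
    · intro t
      exact pow_ne_zero 3 (norm_ne_zero_iff.mpr (hne t))
  have hint : (∫ t in (0:ℝ)..1, 1/‖b - t • a‖^3) = F 1 - F 0 :=
    intervalIntegral.integral_eq_sub_of_hasDerivAt (fun t _ => hderiv t)
      (hcont.intervalIntegrable 0 1)
  have hF1 : F 1 = (A^2 - d) / (K * C) := by
    rw [hFdef]
    simp only [← hnorm 1, one_smul, mul_one, ← hCdef]
  have hF0 : F 0 = -d / (K * B) := by
    rw [hFdef]
    simp only [← hnorm 0, zero_smul, sub_zero, mul_zero, zero_sub, ← hBdef]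
  -- inner products of normalized vectors
  have hib : (inner ℝ (A⁻¹ • a) (B⁻¹ • b) : ℝ) = A⁻¹ * (B⁻¹ * d) := by
    rw [real_inner_smul_left, real_inner_smul_right, hddef]
  have hiac : (inner ℝ a (b - a) : ℝ) = d - A^2 := by
    rw [inner_sub_right, ← hddef, real_inner_self_eq_norm_sq, ← hAdef]
  have hic : (inner ℝ (A⁻¹ • a) (C⁻¹ • (b - a)) : ℝ) = A⁻¹ * (C⁻¹ * (d - A^2)) := by
    rw [real_inner_smul_left, real_inner_smul_right, hiac]
  have hC2 : C^2 = B^2 - 2*d + A^2 := by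
    rw [hCdef, norm_sub_sq_real, real_inner_comm, ← hddef, ← hAdef, ← hBdef]
  rw [hint, hF1, hF0, hib, hic, cross3_smul_smul, cross3_smul_smul, cross3_sub_self,
    smul_smul, smul_smul, ← sub_smul]
  congr 1
  rw [hKdef] at hK ⊢
  exact scalar_id A B C d hA hB hC hK hC2
end

section
/- For all real numbers a, b, and λ, |(λ² - (a+b)²)/(λ² + (a+b)²)² - (λ² - (a-b)²)/(λ² + (a-b)²)²| ≤ 3·|4ab/((λ² + (a+b)²)(λ² + (a-b)²))|, and moreover this is at most 3·|4ab|/(a² - b²)² = 3·sgn(ab)·(1/(a-b)² - 1/(a+b)²) whenever a² ≠ b². -/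
/-!
With `t = λ²`, `x = (a+b)²`, `y = (a-b)²` (so `x - y = 4ab` and `xy = (a²-b²)²`), the difference
`(t-x)/(t+x)² - (t-y)/(t+y)²` factors as `-(x-y) N / ((t+x)²(t+y)²)` with
`N = 3t² + t(x+y) - xy`. For nonnegative `t, x, y` both `3(t+x)(t+y) - N` and `3(t+x)(t+y) + N`
are sums of nonnegative terms, so `|N| ≤ 3(t+x)(t+y)`; and `(t+x)(t+y) ≥ xy` removes `λ`.
-/

theorem sub_div_sq_sub_sub_div_sq {t x y : ℝ} (hx : t + x ≠ 0) (hy : t + y ≠ 0) :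
    (t - x) / (t + x) ^ 2 - (t - y) / (t + y) ^ 2 =
      -(x - y) * (3 * t ^ 2 + t * (x + y) - x * y) / ((t + x) ^ 2 * (t + y) ^ 2) := by
  field_simp
  ring

theorem abs_three_mul_sq_add_sub_le {t x y : ℝ} (ht : 0 ≤ t) (hx : 0 ≤ x) (hy : 0 ≤ y) :
    |3 * t ^ 2 + t * (x + y) - x * y| ≤ 3 * ((t + x) * (t + y)) := by
  have htxy : 0 ≤ t * (x + y) := mul_nonneg ht (add_nonneg hx hy)
  have hxy : 0 ≤ x * y := mul_nonneg hx hy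
  rw [abs_le]
  constructor <;> nlinarith [sq_nonneg t]

theorem abs_sub_div_sq_sub_sub_div_sq_le {t x y : ℝ} (ht : 0 ≤ t) (hx : 0 < x) (hy : 0 < y) :
    |(t - x) / (t + x) ^ 2 - (t - y) / (t + y) ^ 2| ≤
      3 * |(x - y) / ((t + x) * (t + y))| := by
  have hP : 0 < t + x := by positivity
  have hQ : 0 < t + y := by positivity
  rw [sub_div_sq_sub_sub_div_sq hP.ne' hQ.ne', abs_div, abs_div, abs_mul, abs_neg,
    abs_of_pos (by positivity : 0 < (t + x) ^ 2 * (t + y) ^ 2),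
    abs_of_pos (mul_pos hP hQ), div_le_iff₀ (by positivity)]
  calc |x - y| * |3 * t ^ 2 + t * (x + y) - x * y|
      ≤ |x - y| * (3 * ((t + x) * (t + y))) :=
        mul_le_mul_of_nonneg_left (abs_three_mul_sq_add_sub_le ht hx.le hy.le) (abs_nonneg _)
    _ = 3 * (|x - y| / ((t + x) * (t + y))) * ((t + x) ^ 2 * (t + y) ^ 2) := by
        field_simp

theorem abs_div_add_mul_add_le {t x y z : ℝ} (ht : 0 ≤ t) (hx : 0 < x) (hy : 0 < y) :
    |z / ((t + x) * (t + y))| ≤ |z| / (x * y) := by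
  rw [abs_div, abs_of_pos (by positivity : 0 < (t + x) * (t + y))]
  apply div_le_div_of_nonneg_left (abs_nonneg z) (mul_pos hx hy)
  nlinarith [mul_nonneg ht hx.le, mul_nonneg ht hy.le]

theorem Real.sign_mul_self (r : ℝ) : Real.sign r * r = |r| := by
  rcases lt_trichotomy r 0 with hr | rfl | hr
  · rw [Real.sign_of_neg hr, abs_of_neg hr, neg_one_mul]
  · simp
  · rw [Real.sign_of_pos hr, abs_of_pos hr, one_mul]

theorem one_div_sub_sq_sub_one_div_add_sq {a b : ℝ} (h : a ^ 2 ≠ b ^ 2) :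
    1 / (a - b) ^ 2 - 1 / (a + b) ^ 2 = 4 * a * b / (a ^ 2 - b ^ 2) ^ 2 := by
  have hsub : a - b ≠ 0 := fun h' => h (by rw [sub_eq_zero.mp h'])
  have hadd : a + b ≠ 0 := fun h' => h (by rw [eq_neg_of_add_eq_zero_left h', neg_sq])
  have hsq : a ^ 2 - b ^ 2 ≠ 0 := sub_ne_zero.mpr h
  field_simp
  ring

theorem domination_inequality (a b l : ℝ) (hab : a + b ≠ 0) (hab' : a - b ≠ 0) :
    |(l ^ 2 - (a + b) ^ 2) / (l ^ 2 + (a + b) ^ 2) ^ 2 -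
        (l ^ 2 - (a - b) ^ 2) / (l ^ 2 + (a - b) ^ 2) ^ 2| ≤
      3 * |4 * a * b / ((l ^ 2 + (a + b) ^ 2) * (l ^ 2 + (a - b) ^ 2))| ∧
    (a ^ 2 ≠ b ^ 2 →
      (|(l ^ 2 - (a + b) ^ 2) / (l ^ 2 + (a + b) ^ 2) ^ 2 -
          (l ^ 2 - (a - b) ^ 2) / (l ^ 2 + (a - b) ^ 2) ^ 2| ≤
        3 * |4 * a * b| / (a ^ 2 - b ^ 2) ^ 2 ∧
      (a * b ≠ 0 →
        3 * |4 * a * b| / (a ^ 2 - b ^ 2) ^ 2 =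
          3 * Real.sign (a * b) * (1 / (a - b) ^ 2 - 1 / (a + b) ^ 2)))) := by
  have hx : 0 < (a + b) ^ 2 := by positivity
  have hy : 0 < (a - b) ^ 2 := by positivity
  have hxy : (a + b) ^ 2 - (a - b) ^ 2 = 4 * a * b := by ring
  have hmul : (a + b) ^ 2 * (a - b) ^ 2 = (a ^ 2 - b ^ 2) ^ 2 := by ring
  have hbound := abs_sub_div_sq_sub_sub_div_sq_le (sq_nonneg l) hx hy
  rw [hxy] at hbound
  refine ⟨hbound, fun hne => ⟨?_, fun _ => ?_⟩⟩
  · calc _ ≤ _ := hbound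
      _ ≤ 3 * (|4 * a * b| / (a ^ 2 - b ^ 2) ^ 2) := by
        rw [← hmul]
        gcongr
        exact abs_div_add_mul_add_le (sq_nonneg l) hx hy
      _ = _ := (mul_div_assoc _ _ _).symm
  · have habs : |4 * a * b| = 4 * (Real.sign (a * b) * (a * b)) := by
      rw [Real.sign_mul_self, mul_assoc, abs_mul, abs_of_pos four_pos]
    rw [one_div_sub_sq_sub_one_div_add_sq hne, habs]
    ring
end

section
/- For nonzero real numbers ωx and ωz, ∫₀^{π/2} 1/(1 + (ωz²/ωx²)·csc²(φ)) dφ = (π/2)·(1 - |ωz|/√(ωx² + ωz²)). -/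
open Real

open Filter Topology

theorem csc_squared_integral (ωx ωz : ℝ) (hx : ωx ≠ 0) (hz : ωz ≠ 0) :
    ∫ φ in (0:ℝ)..(π / 2),
        1 / (1 + (ωz ^ 2 / ωx ^ 2) * (1 / Real.sin φ) ^ 2) =
      (π / 2) * (1 - |ωz| / Real.sqrt (ωx ^ 2 + ωz ^ 2)) := by
  have hx2 : (0:ℝ) < ωx ^ 2 := by positivity
  have hz2 : (0:ℝ) < ωz ^ 2 := by positivity
  set s : ℝ := Real.sqrt (ωx ^ 2 + ωz ^ 2) with hs_def
  have hs_pos : 0 < s := Real.sqrt_pos.mpr (by positivity)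
  have hs2 : s ^ 2 = ωx ^ 2 + ωz ^ 2 := Real.sq_sqrt (by positivity)
  have hzabs : (0:ℝ) < |ωz| := abs_pos.mpr hz
  have hzabs2 : |ωz| ^ 2 = ωz ^ 2 := sq_abs ωz
  set a : ℝ := |ωz| / s with ha_def
  set b : ℝ := s / |ωz| with hb_def
  set g : ℝ → ℝ := fun φ => ωx ^ 2 * Real.sin φ ^ 2 / (ωx ^ 2 * Real.sin φ ^ 2 + ωz ^ 2)
    with hg_def
  have hg_cont : Continuous g := by
    apply Continuous.div (by continuity) (by continuity)
    intro x
    have : (0:ℝ) < ωx ^ 2 * Real.sin x ^ 2 + ωz ^ 2 := by positivity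
    linarith
  -- Step 1: replace integrand by g
  have step1 : ∫ φ in (0:ℝ)..(π / 2),
      1 / (1 + (ωz ^ 2 / ωx ^ 2) * (1 / Real.sin φ) ^ 2) = ∫ φ in (0:ℝ)..(π / 2), g φ := by
    apply intervalIntegral.integral_congr_ae
    filter_upwards with x hx'
    rw [Set.uIoc_of_le (by positivity : (0:ℝ) ≤ π / 2)] at hx'
    have hsin : 0 < Real.sin x := Real.sin_pos_of_pos_of_lt_pi hx'.1
      (lt_of_le_of_lt hx'.2 (by linarith [pi_pos]))
    simp only [hg_def]
    field_simp
  rw [step1]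
  -- F is the antiderivative on [0, π/2)
  set F : ℝ → ℝ := fun φ => φ - a * Real.arctan (b * Real.tan φ) with hF_def
  have hderiv : ∀ x ∈ Set.Ico (0:ℝ) (π / 2), HasDerivAt F (g x) x := by
    intro x hx'
    have hcos : 0 < Real.cos x := Real.cos_pos_of_mem_Ioo ⟨by linarith [hx'.1, pi_pos], hx'.2⟩
    have ht := Real.hasDerivAt_tan hcos.ne'
    have harc := Real.hasDerivAt_arctan (b * Real.tan x)
    have hcomp := (harc.comp x (ht.const_mul b)).const_mul a
    have : HasDerivAt F (1 - a * (1 / (1 + (b * Real.tan x) ^ 2) * (b * (1 / Real.cos x ^ 2)))) x :=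
      (hasDerivAt_id x).sub hcomp
    convert this using 1
    have htan : Real.tan x = Real.sin x / Real.cos x := Real.tan_eq_sin_div_cos x
    have hpy : Real.sin x ^ 2 + Real.cos x ^ 2 = 1 := Real.sin_sq_add_cos_sq x
    have hden : (0:ℝ) < ωx ^ 2 * Real.sin x ^ 2 + ωz ^ 2 := by positivity
    simp only [hg_def, ha_def, hb_def, htan]
    have h1 : (0:ℝ) < 1 + (s / |ωz| * (Real.sin x / Real.cos x)) ^ 2 := by positivity
    rw [div_eq_iff hden.ne']
    field_simp
    have hA : (|ωz| * Real.cos x) ^ 2 + (s * Real.sin x) ^ 2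
        = ωx ^ 2 * Real.sin x ^ 2 + ωz ^ 2 := by
      linear_combination (Real.cos x ^ 2) * hzabs2 + (Real.sin x ^ 2) * hs2 + ωz ^ 2 * hpy
    rw [show |ωz| ^ 2 * Real.cos x ^ 2 + Real.sin x ^ 2 * s ^ 2 = ωx ^ 2 * Real.sin x ^ 2 + ωz ^ 2 by
      linear_combination hA]
    linear_combination (ωx ^ 2 * Real.sin x ^ 2 + ωz ^ 2) * hzabs2
  have hF0 : F 0 = 0 := by simp [hF_def]
  have hFTC : ∀ T ∈ Set.Ico (0:ℝ) (π / 2), ∫ x in (0:ℝ)..T, g x = F T := by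
    intro T hT
    have h := intervalIntegral.integral_eq_sub_of_hasDerivAt (f := F) (f' := g)
      (fun x hx' => hderiv x (by
        rw [Set.uIcc_of_le hT.1] at hx'
        exact ⟨hx'.1, lt_of_le_of_lt hx'.2 hT.2⟩)) (hg_cont.intervalIntegrable _ _)
    rw [h, hF0, sub_zero]
  -- limits
  have hne : (𝓝[<] (π / 2)).NeBot := by infer_instance
  have hlim1 : Tendsto (fun T => ∫ x in (0:ℝ)..T, g x) (𝓝[<] (π / 2))
      (𝓝 (∫ x in (0:ℝ)..(π / 2), g x)) :=
    ((intervalIntegral.continuous_primitive (fun _ _ => hg_cont.intervalIntegrable _ _)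
      0).continuousAt.tendsto).mono_left nhdsWithin_le_nhds
  have hb_pos : 0 < b := by positivity
  have hlim2 : Tendsto F (𝓝[<] (π / 2)) (𝓝 (π / 2 - a * (π / 2))) := by
    apply Tendsto.sub
    · exact tendsto_id.mono_left nhdsWithin_le_nhds
    · apply Tendsto.const_mul
      have h1 : Tendsto (fun T => b * Real.tan T) (𝓝[<] (π / 2)) atTop :=
        (Real.tendsto_tan_pi_div_two).const_mul_atTop hb_pos
      exact ((Real.tendsto_arctan_atTop.mono_right nhdsWithin_le_nhds).comp h1)
  have heq : (fun T => ∫ x in (0:ℝ)..T, g x) =ᶠ[𝓝[<] (π / 2)] F := by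
    filter_upwards [Ioo_mem_nhdsLT_of_mem (by constructor <;> [positivity; rfl] :
      (π / 2) ∈ Set.Ioc (0:ℝ) (π / 2))] with T hT
    exact hFTC T ⟨hT.1.le, hT.2⟩
  have := tendsto_nhds_unique (hlim1.congr' heq) hlim2
  rw [this, ha_def]
  field_simp
end

section
/- For a, b, c measurable real-valued functions on a measure space D such that sgn(a(η)b(η)c(η)) is constant in η, define f(η; λ) = c(η)·[ (λ² - (a+b)²)/(λ² + (a+b)²)² - (λ² - (a-b)²)/(λ² + (a-b)²)² ] (with a = a(η), b = b(η)). If f(·; 0) is integrable on D and a(η)² ≠ b(η)² a.e. and all relevant denominators are nonzero, then lim_{λ → 0⁺} ∫_D f(η; λ) dη = ∫_D f(η; 0) dη. -/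
/-!
With `x = λ²`, `s = (a+b)²`, `t = (a-b)²`, the bracket in `f(η; λ)` is
`(x - s)/(x + s)² - (x - t)/(x + t)²`, which equals `(t - s)(3x² + (s+t)x - st) / ((x+s)²(x+t)²)`.
Since `0 ≤ 3x² + (s+t)x ≤ 3(x+s)(x+t)` and `0 < st ≤ (x+s)(x+t)`, it is bounded by
`3 |s - t| / (st) = 3 |1/t - 1/s|`, i.e. by three times the bracket at `λ = 0`.
So `3 |f(·; 0)|` is an integrable majorant and dominated convergence applies.
-/

open MeasureTheory Filter

noncomputable def kernel (lam u : ℝ) : ℝ := (lam ^ 2 - u ^ 2) / (lam ^ 2 + u ^ 2) ^ 2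

lemma abs_sub_mul_le_three_mul (x s t : ℝ) (hx : 0 ≤ x) (hs : 0 < s) (ht : 0 < t) :
    |3 * x ^ 2 + (s + t) * x - s * t| * (s * t) ≤ 3 * ((x + s) ^ 2 * (x + t) ^ 2) := by
  have hst : 0 < s * t := mul_pos hs ht
  have hst_le : s * t ≤ (x + s) * (x + t) := by nlinarith
  have hp : 0 ≤ 3 * x ^ 2 + (s + t) * x := by positivity
  have hp_le : 3 * x ^ 2 + (s + t) * x ≤ 3 * ((x + s) * (x + t)) := by nlinarith
  have habs : |3 * x ^ 2 + (s + t) * x - s * t| ≤ 3 * ((x + s) * (x + t)) :=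
    abs_sub_le_iff.2 ⟨by linarith, by linarith⟩
  calc |3 * x ^ 2 + (s + t) * x - s * t| * (s * t)
      ≤ 3 * ((x + s) * (x + t)) * ((x + s) * (x + t)) :=
        mul_le_mul habs hst_le hst.le (by positivity)
    _ = 3 * ((x + s) ^ 2 * (x + t) ^ 2) := by ring

lemma abs_div_sq_sub_div_sq_le (x s t : ℝ) (hx : 0 ≤ x) (hs : 0 < s) (ht : 0 < t) :
    |(x - s) / (x + s) ^ 2 - (x - t) / (x + t) ^ 2| ≤ 3 * |1 / t - 1 / s| := by
  have hD : 0 < (x + s) ^ 2 * (x + t) ^ 2 := by positivity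
  have hst : 0 < s * t := mul_pos hs ht
  have hlhs : (x - s) / (x + s) ^ 2 - (x - t) / (x + t) ^ 2
      = (t - s) * (3 * x ^ 2 + (s + t) * x - s * t) / ((x + s) ^ 2 * (x + t) ^ 2) := by
    field_simp
    ring
  have hrhs : 1 / t - 1 / s = (s - t) / (s * t) := by
    field_simp
  rw [hlhs, hrhs, abs_div, abs_div, abs_of_pos hD, abs_of_pos hst, abs_mul, abs_sub_comm t s,
    ← mul_div_assoc, div_le_div_iff₀ hD hst, mul_assoc, mul_assoc, mul_left_comm 3]
  exact mul_le_mul_of_nonneg_left (abs_sub_mul_le_three_mul x s t hx hs ht) (abs_nonneg _)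

lemma kernel_zero (u : ℝ) : kernel 0 u = -1 / u ^ 2 := by
  rcases eq_or_ne u 0 with rfl | hu
  · simp [kernel]
  · rw [kernel]
    field_simp
    ring

lemma abs_kernel_sub_le {u v : ℝ} (hu : u ≠ 0) (hv : v ≠ 0) (lam : ℝ) :
    |kernel lam u - kernel lam v| ≤ 3 * |kernel 0 u - kernel 0 v| := by
  have hkernel0 : kernel 0 u - kernel 0 v = 1 / v ^ 2 - 1 / u ^ 2 := by
    rw [kernel_zero, kernel_zero]; ring
  rw [hkernel0]
  exact abs_div_sq_sub_div_sq_le (lam ^ 2) _ _ (sq_nonneg lam) (by positivity) (by positivity)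

lemma continuousAt_kernel {u : ℝ} (hu : u ≠ 0) : ContinuousAt (kernel · u) 0 := by
  unfold kernel
  exact ContinuousAt.div (by fun_prop) (by fun_prop) (by positivity)

lemma measurable_kernel {α : Type*} [MeasurableSpace α] {u : α → ℝ} (hu : Measurable u)
    (lam : ℝ) : Measurable fun η => kernel lam (u η) := by
  unfold kernel
  fun_prop

lemma add_ne_zero_and_sub_ne_zero_of_sq_ne_sq {a b : ℝ} (h : a ^ 2 ≠ b ^ 2) :
    a + b ≠ 0 ∧ a - b ≠ 0 := by
  constructor <;> intro h' <;> apply h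
  · rw [eq_neg_of_add_eq_zero_left h', neg_sq]
  · rw [sub_eq_zero.1 h']

theorem dominated_convergence_corollary_general {α : Type*} [MeasureSpace α]
    (a b c : α → ℝ)
    (ha : Measurable a) (hb : Measurable b) (hc : Measurable c)
    (hne : ∀ᵐ η : α, a η ^ 2 ≠ b η ^ 2)
    (hint : Integrable (fun η : α =>
      c η * (((0:ℝ) ^ 2 - (a η + b η) ^ 2) / ((0:ℝ) ^ 2 + (a η + b η) ^ 2) ^ 2 -
        ((0:ℝ) ^ 2 - (a η - b η) ^ 2) / ((0:ℝ) ^ 2 + (a η - b η) ^ 2) ^ 2))) :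
    Tendsto
      (fun lam : ℝ => ∫ η : α,
        c η * ((lam ^ 2 - (a η + b η) ^ 2) / (lam ^ 2 + (a η + b η) ^ 2) ^ 2 -
          (lam ^ 2 - (a η - b η) ^ 2) / (lam ^ 2 + (a η - b η) ^ 2) ^ 2))
      (nhdsWithin 0 (Set.Ioi 0))
      (nhds (∫ η : α,
        c η * (((0:ℝ) ^ 2 - (a η + b η) ^ 2) / ((0:ℝ) ^ 2 + (a η + b η) ^ 2) ^ 2 -
          ((0:ℝ) ^ 2 - (a η - b η) ^ 2) / ((0:ℝ) ^ 2 + (a η - b η) ^ 2) ^ 2))) := by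
  change Integrable (fun η => c η * (kernel 0 (a η + b η) - kernel 0 (a η - b η))) at hint
  change Tendsto (fun lam => ∫ η, c η * (kernel lam (a η + b η) - kernel lam (a η - b η))) _
    (nhds (∫ η, c η * (kernel 0 (a η + b η) - kernel 0 (a η - b η))))
  have hne' := hne.mono fun η => add_ne_zero_and_sub_ne_zero_of_sq_ne_sq
  refine tendsto_integral_filter_of_dominated_convergence
    (fun η => 3 * ‖c η * (kernel 0 (a η + b η) - kernel 0 (a η - b η))‖)
    (Eventually.of_forall fun lam => ?_) (Eventually.of_forall fun lam => ?_)
    (hint.norm.const_mul 3) ?_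
  · exact (hc.mul ((measurable_kernel (ha.add hb) lam).sub
      (measurable_kernel (ha.sub hb) lam))).aestronglyMeasurable
  · filter_upwards [hne'] with η ⟨hadd, hsub⟩
    rw [norm_mul, norm_mul, Real.norm_eq_abs, Real.norm_eq_abs, mul_left_comm]
    exact mul_le_mul_of_nonneg_left (abs_kernel_sub_le hadd hsub lam) (abs_nonneg _)
  · filter_upwards [hne'] with η ⟨hadd, hsub⟩
    exact (continuousAt_const.mul ((continuousAt_kernel hadd).sub
      (continuousAt_kernel hsub))).tendsto.mono_left nhdsWithin_le_nhds

theorem dominated_convergence_corollary {α : Type*} [MeasureSpace α]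
    (a b c : α → ℝ)
    (ha : Measurable a) (hb : Measurable b) (hc : Measurable c)
    (hsgn : ∀ η η' : α,
      Real.sign (a η * b η * c η) = Real.sign (a η' * b η' * c η'))
    (hne : ∀ᵐ η : α, a η ^ 2 ≠ b η ^ 2)
    (hint : Integrable (fun η : α =>
      c η * (((0:ℝ) ^ 2 - (a η + b η) ^ 2) / ((0:ℝ) ^ 2 + (a η + b η) ^ 2) ^ 2 -
        ((0:ℝ) ^ 2 - (a η - b η) ^ 2) / ((0:ℝ) ^ 2 + (a η - b η) ^ 2) ^ 2))) :
    Tendsto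
      (fun lam : ℝ => ∫ η : α,
        c η * ((lam ^ 2 - (a η + b η) ^ 2) / (lam ^ 2 + (a η + b η) ^ 2) ^ 2 -
          (lam ^ 2 - (a η - b η) ^ 2) / (lam ^ 2 + (a η - b η) ^ 2) ^ 2))
      (nhdsWithin 0 (Set.Ioi 0))
      (nhds (∫ η : α,
        c η * (((0:ℝ) ^ 2 - (a η + b η) ^ 2) / ((0:ℝ) ^ 2 + (a η + b η) ^ 2) ^ 2 -
          ((0:ℝ) ^ 2 - (a η - b η) ^ 2) / ((0:ℝ) ^ 2 + (a η - b η) ^ 2) ^ 2))) :=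
  dominated_convergence_corollary_general a b c ha hb hc hne hint
end
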